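/- arXiv:1806.07980 — 5 statements merged into one kernel-verified Lean document; each statement's English description precedes it below -/
import Mathlib

section
/- Let F > 0, κ > 0 and suppose F > 4(F+κ)². Then at the steady state (u₊, v₋) and wave number m = 0, the constant coefficient of the dispersion relation satisfies D = (F+κ)(v₋² − F) < 0, and consequently the quadratic λ² + λ·T + D has a real root λ > 0. Hence the steady state (u₊, v₋) is always (linearly) unstable. -/
/-!
Since `γ F = F + κ`, the steady-state formulas give `u₊ v₋ = (1 - s²) / (4γ) = γ F = F + κ`
with `s = √(1 - 4γ²F)`, which turns `D` into `(F + κ)(v₋² - F)`. As `0 < s < 1`, also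
`(1 - s)² < 1 - s² = 4γ²F`, i.e. `v₋² < F`, so `D < 0`; a monic quadratic with negative
constant term has a positive root.
-/

theorem exists_pos_root_of_const_neg {b c : ℝ} (hc : c < 0) :
    ∃ x : ℝ, 0 < x ∧ x ^ 2 + x * b + c = 0 := by
  have hdisc : 0 ≤ b ^ 2 - 4 * c := by nlinarith [sq_nonneg b]
  set r := Real.sqrt (b ^ 2 - 4 * c)
  have hr2 : r ^ 2 = b ^ 2 - 4 * c := Real.sq_sqrt hdisc
  have hbr : b < r := by nlinarith [Real.sqrt_nonneg (b ^ 2 - 4 * c)]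
  exact ⟨(-b + r) / 2, by linarith, by linear_combination hr2 / 4⟩

namespace GrayScott

theorem one_sub_four_mul_sq_mul_pos {F κ : ℝ} (h : F > 4 * (F + κ) ^ 2) :
    0 < 1 - 4 * ((F + κ) / F) ^ 2 * F := by
  have hF : 0 < F := (by positivity : (0 : ℝ) ≤ 4 * (F + κ) ^ 2).trans_lt h
  have hrw : 4 * ((F + κ) / F) ^ 2 * F = 4 * (F + κ) ^ 2 / F := by field_simp
  rwa [hrw, sub_pos, div_lt_one hF]

variable {γ F s : ℝ}

theorem uplus_mul_vminus (hγ : γ ≠ 0) (hs : s ^ 2 = 1 - 4 * γ ^ 2 * F) :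
    (1 + s) / 2 * ((1 - s) / (2 * γ)) = γ * F := by
  field_simp
  linear_combination -hs

theorem vminus_sq_lt (hγ : γ ≠ 0) (hF : 0 < F) (hs_pos : 0 < s)
    (hs : s ^ 2 = 1 - 4 * γ ^ 2 * F) :
    ((1 - s) / (2 * γ)) ^ 2 < F := by
  have hs_lt : s < 1 := by nlinarith [mul_pos (sq_pos_of_ne_zero hγ) hF]
  rw [div_pow, div_lt_iff₀ (by positivity)]
  nlinarith

end GrayScott

open GrayScott in
theorem gs_uplus_vminus_unstable_general (F κ : ℝ) (hκ : 0 < κ)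
    (h : F > 4 * (F + κ) ^ 2)
    (γ up vm : ℝ)
    (hγ : γ = (F + κ) / F)
    (hup : up = (1 + Real.sqrt (1 - 4 * γ ^ 2 * F)) / 2)
    (hvm : vm = (1 - Real.sqrt (1 - 4 * γ ^ 2 * F)) / (2 * γ)) :
    ((F + κ) * (vm ^ 2 + F) - 2 * F * up * vm = (F + κ) * (vm ^ 2 - F) ∧
      (F + κ) * (vm ^ 2 - F) < 0) ∧
    ∃ lam : ℝ, 0 < lam ∧
      lam ^ 2 + lam * (2 * F + κ + vm ^ 2 - 2 * up * vm) +
        ((F + κ) * (vm ^ 2 + F) - 2 * F * up * vm) = 0 := by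
  have hF : 0 < F := (by positivity : (0 : ℝ) ≤ 4 * (F + κ) ^ 2).trans_lt h
  have hγ_pos : 0 < γ := by rw [hγ]; positivity
  have hγF : γ * F = F + κ := by rw [hγ]; field_simp
  have hdisc : 0 < 1 - 4 * γ ^ 2 * F := hγ ▸ one_sub_four_mul_sq_mul_pos h
  have hs := Real.sq_sqrt hdisc.le
  have hs_pos := Real.sqrt_pos.mpr hdisc
  have hprod : up * vm = F + κ := by
    rw [hup, hvm, uplus_mul_vminus hγ_pos.ne' hs, hγF]
  have hvm_sq : vm ^ 2 < F := hvm ▸ vminus_sq_lt hγ_pos.ne' hF hs_pos hs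
  have hD_eq : (F + κ) * (vm ^ 2 + F) - 2 * F * up * vm = (F + κ) * (vm ^ 2 - F) := by
    linear_combination (-2 * F) * hprod
  have hD_neg : (F + κ) * (vm ^ 2 - F) < 0 := mul_neg_of_pos_of_neg (by linarith) (by linarith)
  exact ⟨⟨hD_eq, hD_neg⟩, exists_pos_root_of_const_neg (hD_eq ▸ hD_neg)⟩

/-- At the steady state `(u₊, v₋)` of the Gray–Scott system with `F > 4(F+κ)²`, the
constant coefficient of the dispersion relation at wave number `m = 0` satisfies
`D = (F+κ)(v₋² - F) < 0`, and hence the quadratic `λ² + λ·T + D` has a positive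
real root: the steady state `(u₊, v₋)` is always linearly unstable. -/
theorem gs_uplus_vminus_unstable (F κ : ℝ) (hF : 0 < F) (hκ : 0 < κ)
    (h : F > 4 * (F + κ) ^ 2)
    (γ up vm : ℝ)
    (hγ : γ = (F + κ) / F)
    (hup : up = (1 + Real.sqrt (1 - 4 * γ ^ 2 * F)) / 2)
    (hvm : vm = (1 - Real.sqrt (1 - 4 * γ ^ 2 * F)) / (2 * γ)) :
    ((F + κ) * (vm ^ 2 + F) - 2 * F * up * vm = (F + κ) * (vm ^ 2 - F) ∧
      (F + κ) * (vm ^ 2 - F) < 0) ∧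
    ∃ lam : ℝ, 0 < lam ∧
      lam ^ 2 + lam * (2 * F + κ + vm ^ 2 - 2 * up * vm) +
        ((F + κ) * (vm ^ 2 + F) - 2 * F * up * vm) = 0 :=
  gs_uplus_vminus_unstable_general F κ hκ h γ up vm hγ hup hvm
end

section
/- Let F > 0, κ > 0 with F ≥ 4(F+κ)², and let v₊ = (1/(2γ))(1 + √(1−4γ²F)) with γ = (F+κ)/F. If v₊² = κ (equivalently, if T = v₊² − κ vanishes at the steady state (u₋, v₊) with wave number m = 0), then (F + κ)² = √κ · F; equivalently, F² + (2κ − √κ)·F + κ² = 0. -/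
/-!
The component `v₊` of the steady state is the larger root of the steady-state equation
`γ v² - v + γ F = 0`. Substituting `v₊² = κ` turns this into `γ (F + κ) = v₊`, i.e.
`v₊ = (F + κ)² / F`; in particular `v₊ ≥ 0`, so `v₊ = √κ`.
-/

open Real

lemma mul_sq_sub_add_eq_zero_of_eq_root {a c x : ℝ} (ha : a ≠ 0) (hd : 0 ≤ 1 - 4 * a * c)
    (hx : x = (1 + √(1 - 4 * a * c)) / (2 * a)) : a * x ^ 2 - x + c = 0 := by
  have hdiscrim : discrim a (-1) c = √(1 - 4 * a * c) * √(1 - 4 * a * c) := by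
    rw [mul_self_sqrt hd, discrim]
    ring
  have hroot := (quadratic_eq_zero_iff ha hdiscrim x).mpr (Or.inl (by rw [hx, neg_neg]))
  linear_combination hroot

lemma one_sub_four_mul_sq_div_mul_nonneg {F κ : ℝ} (hF : 0 < F) (h : 4 * (F + κ) ^ 2 ≤ F) :
    0 ≤ 1 - 4 * ((F + κ) / F) ^ 2 * F := by
  have hsimp : 4 * ((F + κ) / F) ^ 2 * F = 4 * (F + κ) ^ 2 / F := by
    field_simp
  rw [hsimp, sub_nonneg, div_le_one hF]
  exact h

lemma eq_sq_div_of_mul_sq_sub_add_eq_zero {F κ x : ℝ} (hF : F ≠ 0)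
    (hroot : (F + κ) / F * x ^ 2 - x + (F + κ) / F * F = 0) (hx : x ^ 2 = κ) :
    x = (F + κ) ^ 2 / F := by
  rw [hx, div_mul_cancel₀ _ hF] at hroot
  field_simp at hroot ⊢
  linear_combination -hroot

theorem gs_hopf_condition_general (F κ : ℝ) (hF : 0 < F)
    (h : F ≥ 4 * (F + κ) ^ 2)
    (γ vp : ℝ)
    (hγ : γ = (F + κ) / F)
    (hvp : vp = (1 + Real.sqrt (1 - 4 * γ ^ 2 * F)) / (2 * γ))
    (hhopf : vp ^ 2 = κ) :
    (F + κ) ^ 2 = Real.sqrt κ * F ∧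
    F ^ 2 + (2 * κ - Real.sqrt κ) * F + κ ^ 2 = 0 := by
  have hκ : 0 ≤ κ := hhopf ▸ sq_nonneg vp
  have hγ0 : γ ≠ 0 := by
    rw [hγ]
    positivity
  have hdisc : 4 * γ * (γ * F) = 4 * γ ^ 2 * F := by ring
  have hd : 0 ≤ 1 - 4 * γ * (γ * F) := by
    rw [hdisc, hγ]
    exact one_sub_four_mul_sq_div_mul_nonneg hF h
  have hroot := mul_sq_sub_add_eq_zero_of_eq_root (x := vp) hγ0 hd (by rw [hdisc, hvp])
  rw [hγ] at hroot
  have hvp_eq := eq_sq_div_of_mul_sq_sub_add_eq_zero hF.ne' hroot hhopf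
  have hsqrt : √κ = vp := by
    rw [← hhopf, sqrt_sq (hvp_eq ▸ by positivity)]
  have key : (F + κ) ^ 2 = √κ * F := by
    rw [hsqrt, hvp_eq, div_mul_cancel₀ _ hF.ne']
  exact ⟨key, by linear_combination key⟩

/-- If the Hopf condition `v₊² = κ` holds at the steady state `(u₋, v₊)` of the
Gray–Scott system (i.e. the trace coefficient `T = v₊² - κ` vanishes at wave
number `m = 0`), then `(F + κ)² = √κ · F`, equivalently
`F² + (2κ - √κ)·F + κ² = 0`. -/
theorem gs_hopf_condition (F κ : ℝ) (hF : 0 < F) (hκ : 0 < κ)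
    (h : F ≥ 4 * (F + κ) ^ 2)
    (γ vp : ℝ)
    (hγ : γ = (F + κ) / F)
    (hvp : vp = (1 + Real.sqrt (1 - 4 * γ ^ 2 * F)) / (2 * γ))
    (hhopf : vp ^ 2 = κ) :
    (F + κ) ^ 2 = Real.sqrt κ * F ∧
    F ^ 2 + (2 * κ - Real.sqrt κ) * F + κ ^ 2 = 0 :=
  gs_hopf_condition_general F κ hF h γ vp hγ hvp hhopf
end

section
/- Let 0 < κ < 1/16 and define F_c = (√κ − 2κ − √((2κ − √κ)² − 4κ²))/2. Then F_c > 0, (F_c + κ)² = √κ · F_c (equivalently F_c² + (2κ − √κ)·F_c + κ² = 0), and 4(F_c + κ)² < F_c, so that the nontrivial steady states of the Gray–Scott system exist at F = F_c. -/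
/-!
`F_c` is the smaller root of `x² + (2κ - √κ) x + κ²`, whose discriminant `κ (1 - 4√κ)` is
nonnegative; it is positive because both roots have positive sum `√κ - 2κ` and product `κ²`.
The root equation reads `(F_c + κ)² = √κ F_c`, so `4 (F_c + κ)² = 4√κ F_c < F_c` as `√κ < 1/4`.
-/

noncomputable def quadraticSmallerRoot (b c : ℝ) : ℝ :=
  (-b - √(b ^ 2 - 4 * c)) / 2

theorem quadraticSmallerRoot_isRoot {b c : ℝ} (hd : 0 ≤ b ^ 2 - 4 * c) :
    quadraticSmallerRoot b c ^ 2 + b * quadraticSmallerRoot b c + c = 0 := by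
  have hsq : √(b ^ 2 - 4 * c) ^ 2 = b ^ 2 - 4 * c := Real.sq_sqrt hd
  unfold quadraticSmallerRoot
  linear_combination hsq / 4

theorem quadraticSmallerRoot_pos {b c : ℝ} (hb : b < 0) (hc : 0 < c) :
    0 < quadraticSmallerRoot b c := by
  have hlt : √(b ^ 2 - 4 * c) < -b := (Real.sqrt_lt' (neg_pos.2 hb)).2 (by linarith)
  unfold quadraticSmallerRoot
  linarith

/-- For `0 < κ < 1/16`, the critical feed rate
`F_c = (√κ - 2κ - √((2κ - √κ)² - 4κ²))/2` satisfies `F_c > 0`,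
`(F_c + κ)² = √κ · F_c` (equivalently `F_c² + (2κ - √κ)·F_c + κ² = 0`), and
`4(F_c + κ)² < F_c`, so the nontrivial steady states exist at `F = F_c`. -/
theorem gs_critical_feed_rate (κ Fc : ℝ) (hκ0 : 0 < κ) (hκ1 : κ < 1 / 16)
    (hFc : Fc = (Real.sqrt κ - 2 * κ -
      Real.sqrt ((2 * κ - Real.sqrt κ) ^ 2 - 4 * κ ^ 2)) / 2) :
    0 < Fc ∧
    (Fc + κ) ^ 2 = Real.sqrt κ * Fc ∧
    Fc ^ 2 + (2 * κ - Real.sqrt κ) * Fc + κ ^ 2 = 0 ∧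
    4 * (Fc + κ) ^ 2 < Fc := by
  set s := √κ
  have hs0 : 0 < s := Real.sqrt_pos.2 hκ0
  have hs4 : s < 1 / 4 := (Real.sqrt_lt' (by norm_num)).2 (by linarith)
  have hκs : κ = s ^ 2 := (Real.sq_sqrt hκ0.le).symm
  have hFc_eq : Fc = quadraticSmallerRoot (2 * κ - s) (κ ^ 2) := by
    rw [hFc, quadraticSmallerRoot, neg_sub]
  have hdisc : (2 * κ - s) ^ 2 - 4 * κ ^ 2 = s ^ 2 * (1 - 4 * s) := by rw [hκs]; ring
  have hroot : Fc ^ 2 + (2 * κ - s) * Fc + κ ^ 2 = 0 :=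
    hFc_eq ▸ quadraticSmallerRoot_isRoot
      (hdisc ▸ mul_nonneg (sq_nonneg s) (by linarith))
  have hpos : 0 < Fc :=
    hFc_eq ▸ quadraticSmallerRoot_pos (by rw [hκs]; nlinarith) (by positivity)
  have hsq : (Fc + κ) ^ 2 = s * Fc := by linear_combination hroot
  refine ⟨hpos, hsq, hroot, ?_⟩
  rw [hsq]
  nlinarith
end

section
/- Let 0 < κ < 1/16 and set F = F_c = (√κ − 2κ − √((2κ − √κ)² − 4κ²))/2. Then with γ = (F+κ)/F and v₊ = (1/(2γ))(1 + √(1−4γ²F)), one has v₊² = κ; consequently the trace coefficient T = v₊² − κ of the dispersion relation at the steady state (u₋, v₊) and wave number m = 0 vanishes, i.e., F = F_c is the Hopf bifurcation point. -/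
/-!
Write `s = √κ` and `t = √(1 - 4s)`, so that `4s = 1 - t²` with `0 ≤ t < 1`. In these
coordinates everything is rational: `F_c = s(1 - t)²/4`, `F_c + κ = s(1 - t)/2`,
`γ = 2/(1 - t)` and the discriminant `1 - 4γ²F_c` is `1 - 4s = t²`, hence
`v₊ = (1 + t)(1 - t)/4 = s`.
-/

open Real

namespace GrayScott

noncomputable def hopfFeed (κ : ℝ) : ℝ :=
  (√κ - 2 * κ - √((2 * κ - √κ) ^ 2 - 4 * κ ^ 2)) / 2

noncomputable def vPlus (F κ : ℝ) : ℝ :=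
  (1 + √(1 - 4 * ((F + κ) / F) ^ 2 * F)) / (2 * ((F + κ) / F))

theorem hopfFeed_sq_eq {s : ℝ} (hs : 0 ≤ s) (hs4 : s ≤ 1 / 4) :
    hopfFeed (s ^ 2) = s * (1 - √(1 - 4 * s)) ^ 2 / 4 := by
  have ht : √(1 - 4 * s) ^ 2 = 1 - 4 * s := sq_sqrt (by linarith)
  have hdisc : √((2 * s ^ 2 - s) ^ 2 - 4 * (s ^ 2) ^ 2) = s * √(1 - 4 * s) := by
    rw [show (2 * s ^ 2 - s) ^ 2 - 4 * (s ^ 2) ^ 2 = s ^ 2 * (1 - 4 * s) by ring,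
      sqrt_mul (sq_nonneg s), sqrt_sq hs]
  rw [hopfFeed, sqrt_sq hs, hdisc]
  linear_combination -(s / 4) * ht

theorem vPlus_eq {s t : ℝ} (ht0 : 0 ≤ t) (ht1 : t < 1) (hst : 4 * s = 1 - t ^ 2) :
    vPlus (s * (1 - t) ^ 2 / 4) (s ^ 2) = s := by
  have h1t : 0 < 1 - t := by linarith
  have hs : 0 < s := by nlinarith
  have hγ : (s * (1 - t) ^ 2 / 4 + s ^ 2) / (s * (1 - t) ^ 2 / 4) = 2 / (1 - t) := by
    field_simp
    linear_combination hst
  have hdisc : 1 - 4 * (2 / (1 - t)) ^ 2 * (s * (1 - t) ^ 2 / 4) = t ^ 2 := by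
    field_simp
    linear_combination -hst
  rw [vPlus, hγ, hdisc, sqrt_sq ht0]
  field_simp
  linear_combination -hst

theorem vPlus_hopfFeed {κ : ℝ} (hκ0 : 0 < κ) (hκ1 : κ < 1 / 16) :
    vPlus (hopfFeed κ) κ = √κ := by
  have hs0 : 0 < √κ := sqrt_pos.mpr hκ0
  have hs4 : √κ < 1 / 4 := by
    rw [sqrt_lt' (by norm_num)]
    linarith
  have ht2 : √(1 - 4 * √κ) ^ 2 = 1 - 4 * √κ := sq_sqrt (by linarith)
  have ht1 : √(1 - 4 * √κ) < 1 := by nlinarith [sqrt_nonneg (1 - 4 * √κ)]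
  conv_lhs => rw [← sq_sqrt hκ0.le, hopfFeed_sq_eq hs0.le hs4.le]
  exact vPlus_eq (sqrt_nonneg _) ht1 (by linarith)

end GrayScott

open GrayScott in
/-- For `0 < κ < 1/16` and `F = F_c` the critical feed rate, the steady-state
component `v₊` satisfies `v₊² = κ`, i.e. the trace coefficient `T = v₊² - κ` of the
dispersion relation at `(u₋, v₊)` and wave number `m = 0` vanishes: `F = F_c` is
the Hopf bifurcation point. -/
theorem gs_hopf_point (κ F γ vp : ℝ) (hκ0 : 0 < κ) (hκ1 : κ < 1 / 16)
    (hF : F = (Real.sqrt κ - 2 * κ -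
      Real.sqrt ((2 * κ - Real.sqrt κ) ^ 2 - 4 * κ ^ 2)) / 2)
    (hγ : γ = (F + κ) / F)
    (hvp : vp = (1 + Real.sqrt (1 - 4 * γ ^ 2 * F)) / (2 * γ)) :
    vp ^ 2 = κ ∧ vp ^ 2 - κ = 0 := by
  have hv : vp = √κ := by
    subst hvp hγ hF
    exact vPlus_hopfFeed hκ0 hκ1
  have hsq : vp ^ 2 = κ := by rw [hv, sq_sqrt hκ0.le]
  exact ⟨hsq, sub_eq_zero.mpr hsq⟩
end

section
/- Let 0 < κ < 1/16 and F_c = (√κ − 2κ − √((2κ − √κ)² − 4κ²))/2. Then F_c < κ; consequently, at the Hopf bifurcation point (where v₊² = κ at the steady state (u₋, v₊)), the constant coefficient of the dispersion relation at m = 0 satisfies D = (F_c + κ)·(κ − F_c) > 0, so the pair of eigenvalues crossing the imaginary axis is purely imaginary and nonzero. -/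
/-! With `s = √κ` the discriminant of `F_c` is `s² (1 - 4s)`, so, writing `t = √(1 - 4s)`,
`F_c + κ = s (1 - t) / 2` and, because `1 - 4s = t²`, `κ - F_c = s t (1 - t) / 2`.
For `0 < κ < 1/16` we have `0 < s < 1/4`, hence `0 < t < 1`, and both factors are positive. -/

open Real

noncomputable def grayScottHopfFeed (κ : ℝ) : ℝ :=
  (√κ - 2 * κ - √((2 * κ - √κ) ^ 2 - 4 * κ ^ 2)) / 2

section

variable {κ : ℝ}

lemma sqrt_grayScottHopf_discr (hκ : 0 ≤ κ) :
    √((2 * κ - √κ) ^ 2 - 4 * κ ^ 2) = √κ * √(1 - 4 * √κ) := by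
  have hs := sq_sqrt hκ
  have hdiscr : (2 * κ - √κ) ^ 2 - 4 * κ ^ 2 = √κ ^ 2 * (1 - 4 * √κ) := by
    linear_combination 4 * √κ * hs
  rw [hdiscr, sqrt_mul (sq_nonneg _), sqrt_sq (sqrt_nonneg _)]

lemma grayScottHopfFeed_add_self (hκ : 0 ≤ κ) :
    grayScottHopfFeed κ + κ = √κ * (1 - √(1 - 4 * √κ)) / 2 := by
  rw [grayScottHopfFeed, sqrt_grayScottHopf_discr hκ]
  ring

lemma self_sub_grayScottHopfFeed (hκ : 0 ≤ κ) (hκ' : κ ≤ 1 / 16) :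
    κ - grayScottHopfFeed κ = √κ * √(1 - 4 * √κ) * (1 - √(1 - 4 * √κ)) / 2 := by
  have hs : √κ ^ 2 = κ := sq_sqrt hκ
  have hs' : √κ ≤ 1 / 4 := by
    rw [sqrt_le_left (by norm_num)]
    linarith
  have ht : √(1 - 4 * √κ) ^ 2 = 1 - 4 * √κ := sq_sqrt (by linarith)
  rw [grayScottHopfFeed, sqrt_grayScottHopf_discr hκ]
  linear_combination √κ / 2 * ht - 2 * hs

lemma sqrt_one_sub_four_sqrt_mem_Ioo (hκ : 0 < κ) (hκ' : κ < 1 / 16) :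
    √(1 - 4 * √κ) ∈ Set.Ioo 0 1 := by
  have hs : 0 < √κ := sqrt_pos.2 hκ
  have hs' : √κ < 1 / 4 := by
    rw [sqrt_lt' (by norm_num)]
    linarith
  constructor
  · exact sqrt_pos.2 (by linarith)
  · rw [sqrt_lt' one_pos]
    linarith

end

/-- For `0 < κ < 1/16`, the critical feed rate `F_c` satisfies `F_c < κ`;
consequently, at the Hopf bifurcation point (where `v₊² = κ`), the constant
coefficient of the dispersion relation at `m = 0` satisfies
`D = (F_c + κ)·(κ - F_c) > 0`, so the eigenvalues crossing the imaginary axis are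
purely imaginary and nonzero. -/
theorem gs_hopf_D_positive (κ Fc : ℝ) (hκ0 : 0 < κ) (hκ1 : κ < 1 / 16)
    (hFc : Fc = (Real.sqrt κ - 2 * κ -
      Real.sqrt ((2 * κ - Real.sqrt κ) ^ 2 - 4 * κ ^ 2)) / 2) :
    Fc < κ ∧ (Fc + κ) * (κ - Fc) > 0 := by
  replace hFc : Fc = grayScottHopfFeed κ := hFc
  have hs : 0 < √κ := sqrt_pos.2 hκ0
  obtain ⟨ht0, ht1⟩ := sqrt_one_sub_four_sqrt_mem_Ioo hκ0 hκ1
  have hsum : 0 < Fc + κ := by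
    rw [hFc, grayScottHopfFeed_add_self hκ0.le]
    exact div_pos (mul_pos hs (sub_pos.2 ht1)) two_pos
  have hdiff : 0 < κ - Fc := by
    rw [hFc, self_sub_grayScottHopfFeed hκ0.le hκ1.le]
    exact div_pos (mul_pos (mul_pos hs ht0) (sub_pos.2 ht1)) two_pos
  exact ⟨sub_pos.1 hdiff, mul_pos hsum hdiff⟩
end
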